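/- arXiv:1708.00209 — 7 statements merged into one kernel-verified Lean document; each statement's English description precedes it below -/
import Mathlib

section
/- Let g be a finite-dimensional real Lie algebra and let r : g* → g be a bijective skew-symmetric solution of the CYBE, with inverse r⁻¹ : g → g*. For α in g*, define the operator ãd*_α : g → g by β(ãd*_α(X)) = −([α,β]^r)(X) for all β in g* (the coadjoint action associated with the Sklyanin bracket, identifying g with g**). Then the Sklyanin-type bracket on g defined by r⁻¹, namely [X,Y]^{r⁻¹} := ãd*_{r⁻¹(X)}(Y) − ãd*_{r⁻¹(Y)}(X), coincides with the original Lie bracket: [X,Y]^{r⁻¹} = [X,Y] for all X, Y in g. -/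
noncomputable section

open Module

variable {g : Type*} [LieRing g] [LieAlgebra ℝ g]

/-- The coadjoint operator: `(coad X α) Y = -α ⁅X, Y⁆`. -/
def coad (X : g) : Module.Dual ℝ g →ₗ[ℝ] Module.Dual ℝ g :=
  -(LieAlgebra.ad ℝ g X).dualMap

/-- A linear map `r : g* → g` is skew-symmetric if `α (r β) = -β (r α)`. -/
def IsSkew (r : Module.Dual ℝ g →ₗ[ℝ] g) : Prop :=
  ∀ α β : Module.Dual ℝ g, α (r β) = -β (r α)

/-- The Sklyanin bracket on `g*` defined by `r`. -/
def sklyanin (r : Module.Dual ℝ g →ₗ[ℝ] g) (α β : Module.Dual ℝ g) : Module.Dual ℝ g :=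
  coad (r α) β - coad (r β) α

/-- `r` is a solution of the classical Yang-Baxter equation. -/
def IsCYBE (r : Module.Dual ℝ g →ₗ[ℝ] g) : Prop :=
  ∀ α β : Module.Dual ℝ g, r (sklyanin r α β) = ⁅r α, r β⁆

/-- `n : g → g` is a Nijenhuis operator. -/
def IsNijenhuis (n : g →ₗ[ℝ] g) : Prop :=
  ∀ X Y : g, ⁅n X, n Y⁆ - n ⁅n X, Y⁆ - n ⁅X, n Y⁆ + n (n ⁅X, Y⁆) = 0

/-- `(r, n)` is an r-n structure on `g`. -/
def IsRN (r : Module.Dual ℝ g →ₗ[ℝ] g) (n : g →ₗ[ℝ] g) : Prop :=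
  IsSkew r ∧ IsCYBE r ∧ IsNijenhuis n ∧
    (∀ α : Module.Dual ℝ g, n (r α) = r (n.dualMap α)) ∧
    ∀ α β : Module.Dual ℝ g,
      coad (r α) (n.dualMap β) - coad (r β) (n.dualMap α)
        - n.dualMap (coad (r α) β) + n.dualMap (coad (r β) α) = 0

/-- The Nijenhuis concomitant of two endomorphisms. -/
def nijConcomitant (n' n : g →ₗ[ℝ] g) (X Y : g) : g :=
  ⁅n' X, n Y⁆ + ⁅n X, n' Y⁆ - n' ⁅n X, Y⁆ - n' ⁅X, n Y⁆ - n ⁅n' X, Y⁆ - n ⁅X, n' Y⁆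
    + n' (n ⁅X, Y⁆) + n (n' ⁅X, Y⁆)

/-- For a bijective skew-symmetric solution `r` of the CYBE with inverse
`rinv : g → g*`, and `tcoad` the coadjoint action associated with the Sklyanin bracket
(`β (tcoad α X) = -([α,β]^r) X`), the Sklyanin-type bracket on `g` defined by `r⁻¹`
coincides with the original Lie bracket. -/
theorem sklyanin_bracket_of_inverse_eq_lie_bracket
    {g : Type*} [LieRing g] [LieAlgebra ℝ g] [FiniteDimensional ℝ g]
    (r : Module.Dual ℝ g →ₗ[ℝ] g) (hskew : IsSkew r) (hcybe : IsCYBE r)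
    (rinv : g →ₗ[ℝ] Module.Dual ℝ g)
    (hrinv₁ : ∀ X : g, r (rinv X) = X) (hrinv₂ : ∀ α : Module.Dual ℝ g, rinv (r α) = α)
    (tcoad : Module.Dual ℝ g → g → g)
    (htcoad : ∀ (α : Module.Dual ℝ g) (X : g) (β : Module.Dual ℝ g),
      β (tcoad α X) = -(sklyanin r α β) X) :
    ∀ X Y : g, tcoad (rinv X) Y - tcoad (rinv Y) X = ⁅X, Y⁆ := by
  intro X Y
  have key : ∀ β : Module.Dual ℝ g, β (tcoad (rinv X) Y - tcoad (rinv Y) X - ⁅X, Y⁆) = 0 := by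
    intro β
    have h1 := htcoad (rinv X) Y β
    have h2 := htcoad (rinv Y) X β
    have h3 : (rinv X) ⁅r β, Y⁆ = -(sklyanin r β (rinv Y)) X := by
      have hb : (⁅r β, Y⁆ : g) = r (sklyanin r β (rinv Y)) := by
        rw [hcybe, hrinv₁]
      rw [hb, hskew, hrinv₁]
    simp only [sklyanin, coad, LinearMap.sub_apply, LinearMap.neg_apply,
      LinearMap.dualMap_apply, LieAlgebra.ad_apply, hrinv₁, map_sub] at h1 h2 h3 ⊢
    rw [h1, h2]
    have h4 : β ⁅Y, X⁆ = -β ⁅X, Y⁆ := by rw [← lie_skew, map_neg]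
    linarith [h3, h4]
  have h0 := (Module.forall_dual_apply_eq_zero_iff ℝ
    (tcoad (rinv X) Y - tcoad (rinv Y) X - ⁅X, Y⁆)).mp key
  exact sub_eq_zero.mp h0
end
end

section
/- Let g be a finite-dimensional real Lie algebra, let r : g* → g be a bijective skew-symmetric solution of the CYBE, and let r' : g* → g be a skew-symmetric solution of the CYBE such that r + r' is also a solution of the CYBE. Then the endomorphism n := r' ∘ r⁻¹ : g → g is a Nijenhuis operator on g. -/
noncomputable section

open Module

variable {g : Type*} [LieRing g] [LieAlgebra ℝ g]

/-- If `r` is a bijective skew-symmetric solution of the CYBE and `r'` is a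
skew-symmetric solution of the CYBE such that `r + r'` is also a solution, then
`n := r' ∘ r⁻¹` is a Nijenhuis operator on `g`. -/
theorem isNijenhuis_comp_inv
    {g : Type*} [LieRing g] [LieAlgebra ℝ g] [FiniteDimensional ℝ g]
    (r r' : Module.Dual ℝ g →ₗ[ℝ] g)
    (hskew : IsSkew r) (hcybe : IsCYBE r)
    (hskew' : IsSkew r') (hcybe' : IsCYBE r')
    (hsum : IsCYBE (r + r'))
    (rinv : g →ₗ[ℝ] Module.Dual ℝ g)
    (hrinv₁ : ∀ X : g, r (rinv X) = X) (hrinv₂ : ∀ α : Module.Dual ℝ g, rinv (r α) = α) :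
    IsNijenhuis (r' ∘ₗ rinv) := by
  intro X Y
  set α := rinv X with hα
  set β := rinv Y with hβ
  have hX : r α = X := hrinv₁ X
  have hY : r β = Y := hrinv₁ Y
  have hskl : sklyanin (r + r') α β = sklyanin r α β + sklyanin r' α β := by
    simp only [sklyanin, coad, LinearMap.add_apply, map_add, LinearMap.neg_apply,
      LinearMap.dualMap_apply]
    ext Z
    simp [coad]
    ring
  -- key mixed identity
  have key : r (sklyanin r' α β) + r' (sklyanin r α β) = ⁅r α, r' β⁆ + ⁅r' α, r β⁆ := by
    have h := hsum α β
    rw [hskl] at h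
    simp only [LinearMap.add_apply, map_add] at h
    rw [hcybe α β, hcybe' α β, lie_add, add_lie, add_lie] at h
    have h0 : (⁅r α, r β⁆ + r' (sklyanin r α β)) + (r (sklyanin r' α β) + ⁅r' α, r' β⁆)
        - (⁅r α, r β⁆ + ⁅r' α, r β⁆ + (⁅r α, r' β⁆ + ⁅r' α, r' β⁆)) = 0 :=
      sub_eq_zero.2 h
    have h1 : r (sklyanin r' α β) + r' (sklyanin r α β) - (⁅r α, r' β⁆ + ⁅r' α, r β⁆)
        = (⁅r α, r β⁆ + r' (sklyanin r α β)) + (r (sklyanin r' α β) + ⁅r' α, r' β⁆)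
          - (⁅r α, r β⁆ + ⁅r' α, r β⁆ + (⁅r α, r' β⁆ + ⁅r' α, r' β⁆)) := by abel
    rw [h0] at h1
    exact sub_eq_zero.1 h1
  have key2 : rinv ⁅r α, r' β⁆ + rinv ⁅r' α, r β⁆
      = sklyanin r' α β + rinv (r' (sklyanin r α β)) := by
    have := congrArg rinv key
    simpa [map_add, hrinv₂] using this.symm
  simp only [LinearMap.comp_apply]
  rw [← hX, ← hY, hrinv₂, hrinv₂, ← hcybe' α β, ← hcybe α β, hrinv₂]
  have e1 : rinv ⁅r' α, r β⁆ = sklyanin r' α β + rinv (r' (sklyanin r α β)) - rinv ⁅r α, r' β⁆ := by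
    rw [← key2]; abel
  rw [e1]
  simp only [map_add, map_sub]
  abel
end
end

section
/- Let g be a finite-dimensional real Lie algebra, let r : g* → g be a bijective skew-symmetric solution of the CYBE, and let r' : g* → g be a skew-symmetric solution of the CYBE such that r + r' is also a solution of the CYBE. Then the pair (r, n) with n := r' ∘ r⁻¹ is an r-n structure on g; in particular n ∘ r = r ∘ nᵗ and the concomitant of r and n vanishes. -/
noncomputable section

open Module

variable {g : Type*} [LieRing g] [LieAlgebra ℝ g]

lemma coad_apply (X : g) (γ : Module.Dual ℝ g) (Y : g) : coad X γ Y = -γ ⁅X, Y⁆ := by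
  simp [coad, LieAlgebra.ad_apply]

lemma coad_add (X X' : g) :
    coad (X + X') = coad X + (coad X' : Module.Dual ℝ g →ₗ[ℝ] Module.Dual ℝ g) := by
  ext γ Y
  simp [coad_apply, add_lie, LinearMap.add_apply]
  ring

lemma sklyanin_add (r r' : Module.Dual ℝ g →ₗ[ℝ] g) (α β : Module.Dual ℝ g) :
    sklyanin (r + r') α β = sklyanin r α β + sklyanin r' α β := by
  simp only [sklyanin, LinearMap.add_apply, coad_add]
  abel

lemma mixed (r r' : Module.Dual ℝ g →ₗ[ℝ] g) (hcybe : IsCYBE r) (hcybe' : IsCYBE r')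
    (hsum : IsCYBE (r + r')) (α β : Module.Dual ℝ g) :
    r (sklyanin r' α β) + r' (sklyanin r α β) = ⁅r α, r' β⁆ + ⁅r' α, r β⁆ := by
  have h := hsum α β
  rw [sklyanin_add] at h
  simp only [LinearMap.add_apply, map_add, add_lie, lie_add] at h
  rw [hcybe α β, hcybe' α β] at h
  rw [← sub_eq_zero] at h ⊢
  rw [← h]
  abel

/-- If `r` is a bijective skew-symmetric solution of the CYBE and `r'` is a
skew-symmetric solution of the CYBE such that `r + r'` is also a solution, then
`(r, n)` with `n := r' ∘ r⁻¹` is an r-n structure on `g`. -/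
theorem isRN_comp_inv
    {g : Type*} [LieRing g] [LieAlgebra ℝ g] [FiniteDimensional ℝ g]
    (r r' : Module.Dual ℝ g →ₗ[ℝ] g)
    (hskew : IsSkew r) (hcybe : IsCYBE r)
    (hskew' : IsSkew r') (hcybe' : IsCYBE r')
    (hsum : IsCYBE (r + r'))
    (rinv : g →ₗ[ℝ] Module.Dual ℝ g)
    (hrinv₁ : ∀ X : g, r (rinv X) = X) (hrinv₂ : ∀ α : Module.Dual ℝ g, rinv (r α) = α) :
    IsRN r (r' ∘ₗ rinv) := by
  set n : g →ₗ[ℝ] g := r' ∘ₗ rinv with hn_def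
  have hn : ∀ ξ : Module.Dual ℝ g, n (r ξ) = r' ξ := by
    intro ξ; simp [hn_def, LinearMap.comp_apply, hrinv₂]
  refine ⟨hskew, hcybe, ?_, ?_, ?_⟩
  · -- Nijenhuis
    intro X Y
    rw [show X = r (rinv X) from (hrinv₁ X).symm, show Y = r (rinv Y) from (hrinv₁ Y).symm]
    set α := rinv X
    set β := rinv Y
    rw [hn α, hn β, ← hcybe α β, hn]
    have hmix : ⁅r' α, r β⁆ = r (sklyanin r' α β) + r' (sklyanin r α β) - ⁅r α, r' β⁆ := by
      rw [mixed r r' hcybe hcybe' hsum α β]; abel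
    rw [hmix]
    simp only [map_add, map_sub, hn]
    rw [hcybe' α β]
    abel
  · -- n ∘ r = r ∘ nᵗ
    intro α
    have key : rinv (r' α) = n.dualMap α := by
      ext X
      have h1 : (rinv (r' α)) X = (rinv (r' α)) (r (rinv X)) := by rw [hrinv₁]
      rw [LinearMap.dualMap_apply, h1, hskew (rinv (r' α)) (rinv X), hrinv₁,
        hskew' (rinv X) α]
      simp [hn_def]
    rw [hn α, ← key, hrinv₁]
  · -- concomitant
    intro α β
    ext Y
    rw [show Y = r (rinv Y) from (hrinv₁ Y).symm]
    set γ := rinv Y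
    simp only [LinearMap.sub_apply, LinearMap.add_apply, LinearMap.zero_apply,
      LinearMap.dualMap_apply, coad_apply]
    have hbac : ∀ ξ η : Module.Dual ℝ g, ⁅r ξ, r η⁆ = r (sklyanin r ξ η) :=
      fun ξ η => (hcybe ξ η).symm
    rw [hbac α γ, hbac β γ, hn, hn, hn γ]
    have hmg := congrArg γ (mixed r r' hcybe hcybe' hsum α β)
    simp only [map_add] at hmg
    have e1 : β (r' (sklyanin r α γ)) = -(sklyanin r α γ) (r' β) := hskew' β _
    have e2 : α (r' (sklyanin r β γ)) = -(sklyanin r β γ) (r' α) := hskew' α _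
    have e3 : γ (r (sklyanin r' α β)) = -(sklyanin r' α β) (r γ) := hskew γ _
    have e4 : γ (r' (sklyanin r α β)) = -(sklyanin r α β) (r' γ) := hskew' γ _
    rw [e3, e4] at hmg
    rw [e1, e2]
    simp only [sklyanin, LinearMap.sub_apply, coad_apply] at hmg ⊢
    have s7 : α ⁅r' β, r γ⁆ = -α ⁅r γ, r' β⁆ := by
      rw [← lie_skew (r γ) (r' β), map_neg, neg_neg]
    have s8 : β ⁅r' α, r γ⁆ = -β ⁅r γ, r' α⁆ := by
      rw [← lie_skew (r γ) (r' α), map_neg, neg_neg]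
    have s9 : γ ⁅r' α, r β⁆ = -γ ⁅r β, r' α⁆ := by
      rw [← lie_skew (r β) (r' α), map_neg, neg_neg]
    linarith [hmg, s7, s8, s9]
end
end

section
/- Let g be a finite-dimensional real Lie algebra and let (r', n') and (r, n) be r-n structures on g such that r + r' is a solution of the CYBE, the Nijenhuis concomitant of n and n' vanishes identically, and (r', n) and (r, n') are also r-n structures. Then (r + r', n + n') is an r-n structure on g. -/
noncomputable section

open Module

variable {g : Type*} [LieRing g] [LieAlgebra ℝ g]

/-- If `(r', n')` and `(r, n)` are r-n structures such that `r + r'` is a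
solution of the CYBE, the Nijenhuis concomitant of `n` and `n'` vanishes identically, and
`(r', n)` and `(r, n')` are also r-n structures, then `(r + r', n + n')` is an r-n
structure on `g`. -/
theorem isRN_add
    {g : Type*} [LieRing g] [LieAlgebra ℝ g] [FiniteDimensional ℝ g]
    (r r' : Module.Dual ℝ g →ₗ[ℝ] g) (n n' : g →ₗ[ℝ] g)
    (h1 : IsRN r' n') (h2 : IsRN r n)
    (hsum : IsCYBE (r + r'))
    (hconc : ∀ X Y : g, nijConcomitant n n' X Y = 0)
    (h3 : IsRN r' n) (h4 : IsRN r n') :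
    IsRN (r + r') (n + n') := by

  obtain ⟨s1, c1, nj1, m1, k1⟩ := h1
  obtain ⟨s2, c2, nj2, m2, k2⟩ := h2
  obtain ⟨s3, c3, nj3, m3, k3⟩ := h3
  obtain ⟨s4, c4, nj4, m4, k4⟩ := h4
  have hdual : (n + n').dualMap = n.dualMap + n'.dualMap := by
    ext φ x; simp [LinearMap.dualMap_apply]
  refine ⟨?_, hsum, ?_, ?_, ?_⟩
  · intro α β
    simp only [LinearMap.add_apply, map_add, s1 α β, s2 α β]
    ring
  · intro X Y
    have hc := hconc X Y
    have hn := nj2 X Y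
    have hn' := nj1 X Y
    simp only [nijConcomitant] at hc
    simp only [LinearMap.add_apply, map_add, lie_add, add_lie]
    linear_combination (norm := module) hc + hn + hn'
  · intro α
    simp only [hdual, LinearMap.add_apply, map_add, m1 α, m2 α, m3 α, m4 α]
    abel
  · intro α β
    have e1 := k1 α β
    have e2 := k2 α β
    have e3 := k3 α β
    have e4 := k4 α β
    ext Z
    have p1 := congrArg (fun f => f Z) e1
    have p2 := congrArg (fun f => f Z) e2
    have p3 := congrArg (fun f => f Z) e3
    have p4 := congrArg (fun f => f Z) e4
    simp only [hdual, coad, LinearMap.add_apply, LinearMap.sub_apply, LinearMap.neg_apply,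
      LinearMap.dualMap_apply, LieAlgebra.ad_apply, map_add, add_lie, lie_add,
      LinearMap.zero_apply] at p1 p2 p3 p4 ⊢
    linarith
end
end

section
/- Let g be a finite-dimensional real Lie algebra and let (r, n) be an r-n structure on g. Then for every natural number k, the pair (r, n^k) is also an r-n structure on g. -/
noncomputable section

open Module

variable {g : Type*} [LieRing g] [LieAlgebra ℝ g]

-- auxiliary lemmas
lemma pow_succ_apply' (n : g →ₗ[ℝ] g) (k : ℕ) (X : g) :
    (n ^ (k + 1)) X = n ((n ^ k) X) := by
  rw [pow_succ']; rfl

lemma pow_succ_apply (n : g →ₗ[ℝ] g) (k : ℕ) (X : g) :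
    (n ^ (k + 1)) X = (n ^ k) (n X) := by
  rw [pow_succ]; rfl

lemma lemG (n : g →ₗ[ℝ] g) (hn : IsNijenhuis n) (j : ℕ) (X Y : g) :
    ⁅(n ^ j) X, n Y⁆ - n ⁅(n ^ j) X, Y⁆ = (n ^ j) (⁅X, n Y⁆ - n ⁅X, Y⁆) := by
  induction j with
  | zero => simp
  | succ j ih =>
    have hN := hn ((n ^ j) X) Y
    simp only [pow_succ_apply' n j]
    rw [← ih]
    apply eq_of_sub_eq_zero
    rw [map_sub]
    rw [show ⁅n ((n ^ j) X), n Y⁆ - n ⁅n ((n ^ j) X), Y⁆ -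
        (n ⁅(n ^ j) X, n Y⁆ - n (n ⁅(n ^ j) X, Y⁆)) =
        ⁅n ((n ^ j) X), n Y⁆ - n ⁅n ((n ^ j) X), Y⁆ - n ⁅(n ^ j) X, n Y⁆ +
        n (n ⁅(n ^ j) X, Y⁆) from by abel]
    exact hN

lemma lemH (n : g →ₗ[ℝ] g) (hn : IsNijenhuis n) (m : ℕ) :
    ∀ (k : ℕ) (X Y : g),
      (n ^ k) (⁅X, (n ^ m) Y⁆ - (n ^ m) ⁅X, Y⁆)
        = ⁅(n ^ k) X, (n ^ m) Y⁆ - (n ^ m) ⁅(n ^ k) X, Y⁆ := by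
  induction m with
  | zero => intro k X Y; simp
  | succ m ih =>
    intro k X Y
    have h1 := ih k X (n Y)
    have h2 := lemG n hn k X Y
    have hc : ∀ w : g, (n ^ m) ((n ^ k) w) = (n ^ k) ((n ^ m) w) := by
      intro w
      have := LinearMap.congr_fun (pow_mul_comm n m k) w
      simpa [Module.End.mul_apply] using this
    simp only [pow_succ_apply n m]
    have h3 := congrArg (n ^ m) h2
    simp only [map_sub] at h1 h2 h3 ⊢
    linear_combination (norm := module) h1 - h3 - hc ⁅X, n Y⁆ + hc (n ⁅X, Y⁆)


/-- If `(r, n)` is an r-n structure on `g`, then for every natural number `k`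
the pair `(r, n^k)` is also an r-n structure on `g`. -/
theorem isRN_pow
    {g : Type*} [LieRing g] [LieAlgebra ℝ g] [FiniteDimensional ℝ g]
    (r : Module.Dual ℝ g →ₗ[ℝ] g) (n : g →ₗ[ℝ] g) (h : IsRN r n) :
    ∀ k : ℕ, IsRN r (n ^ k) := by
  obtain ⟨hskew, hcybe, hnij, hcomm, hcon⟩ := h
  -- the commutation relation for powers
  have hcomm' : ∀ (k : ℕ) (α : Module.Dual ℝ g),
      (n ^ k) (r α) = r ((n ^ k).dualMap α) := by
    intro k
    induction k with
    | zero =>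
      intro α
      have h1 : (1 : g →ₗ[ℝ] g).dualMap α = α := by
        ext X; simp [LinearMap.dualMap_apply]
      simp only [pow_zero, h1, Module.End.one_apply]
    | succ k ih =>
      intro α
      have hd : (n ^ (k + 1)).dualMap α = (n ^ k).dualMap (n.dualMap α) := by
        ext X
        simp [LinearMap.dualMap_apply, pow_succ_apply' n k]
      rw [hd, ← ih, ← hcomm, pow_succ_apply n k]
  -- pointwise form of the concomitant hypothesis
  have base : ∀ (α β : Module.Dual ℝ g) (Y : g),
      β ⁅r α, n Y⁆ - β (n ⁅r α, Y⁆) = α ⁅r β, n Y⁆ - α (n ⁅r β, Y⁆) := by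
    intro α β Y
    have hc := DFunLike.congr_fun (hcon α β) Y
    simp only [coad, LinearMap.sub_apply, LinearMap.add_apply, LinearMap.neg_apply,
      LinearMap.dualMap_apply, LieAlgebra.ad_apply, LinearMap.zero_apply] at hc
    linarith
  -- the concomitant relation for powers
  have key : ∀ (k : ℕ) (α β : Module.Dual ℝ g) (Y : g),
      β ⁅r α, (n ^ k) Y⁆ - β ((n ^ k) ⁅r α, Y⁆)
        = α ⁅r β, (n ^ k) Y⁆ - α ((n ^ k) ⁅r β, Y⁆) := by
    intro k
    induction k with
    | zero => intro α β Y; simp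
    | succ k ih =>
      intro α β Y
      have h1 := base α β ((n ^ k) Y)
      have h2 := ih α (n.dualMap β) Y
      rw [← hcomm β] at h2
      simp only [LinearMap.dualMap_apply] at h2
      have h3g := lemH n hnij k 1 (r β) Y
      simp only [pow_one, map_sub] at h3g
      have h3 := congrArg α h3g
      simp only [map_sub] at h3
      simp only [pow_succ_apply' n k, map_sub] at ih ⊢
      linarith
  intro k
  refine ⟨hskew, hcybe, ?_, hcomm' k, ?_⟩
  · intro X Y
    have hH := lemH n hnij k k X Y
    rw [map_sub] at hH
    rw [← hH]
    abel
  · intro α β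
    ext Y
    have hk := key k α β Y
    simp only [coad, LinearMap.sub_apply, LinearMap.add_apply, LinearMap.neg_apply,
      LinearMap.dualMap_apply, LieAlgebra.ad_apply, LinearMap.zero_apply]
    linarith
end
end

section
/- Let g be a finite-dimensional real Lie algebra and let (r, n) be an r-n structure on g. Then for all natural numbers k and l, the map n^k ∘ r + n^l ∘ r : g* → g is a solution of the CYBE; that is, the r-matrices of the hierarchy r_k := n^k ∘ r are pairwise compatible. -/
noncomputable section

open Module

variable {g : Type*} [LieRing g] [LieAlgebra ℝ g]

section Aux

variable (n : g →ₗ[ℝ] g)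

lemma aux_pow_succ_apply (m : ℕ) (Z : g) : (n ^ (m + 1)) Z = (n ^ m) (n Z) := by
  rw [pow_succ, Module.End.mul_apply]

lemma aux_pow_succ_apply' (m : ℕ) (Z : g) : (n ^ (m + 1)) Z = n ((n ^ m) Z) := by
  rw [pow_succ', Module.End.mul_apply]

lemma aux_pow_comm (b : ℕ) (W : g) : n ((n ^ b) W) = (n ^ b) (n W) := by
  rw [← aux_pow_succ_apply' n b W, aux_pow_succ_apply n b W]

lemma aux_dual_pow_apply (k : ℕ) (β : Module.Dual ℝ g) (Z : g) :
    ((n.dualMap ^ k) β) Z = β ((n ^ k) Z) := by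
  induction k generalizing β with
  | zero => simp
  | succ m ih =>
      rw [pow_succ, Module.End.mul_apply, ih, LinearMap.dualMap_apply,
        aux_pow_succ_apply' n m Z]

/-- Rearranged Nijenhuis identity. -/
lemma aux_nij (hnij : IsNijenhuis n) (X Y : g) :
    ⁅n X, n Y⁆ = n ⁅n X, Y⁆ + n ⁅X, n Y⁆ - n (n ⁅X, Y⁆) := by
  have h' := hnij X Y
  rw [show (⁅n X, n Y⁆ : g) - n ⁅n X, Y⁆ - n ⁅X, n Y⁆ + n (n ⁅X, Y⁆)
      = ⁅n X, n Y⁆ - (n ⁅n X, Y⁆ + n ⁅X, n Y⁆ - n (n ⁅X, Y⁆)) from by abel] at h'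
  exact sub_eq_zero.mp h'

lemma aux_G_pow (hnij : IsNijenhuis n) (k : ℕ) (X Z : g) :
    ⁅(n ^ k) X, n Z⁆ - n ⁅(n ^ k) X, Z⁆ = (n ^ k) (⁅X, n Z⁆ - n ⁅X, Z⁆) := by
  induction k with
  | zero => simp
  | succ m ih =>
      rw [aux_pow_succ_apply' n m X, aux_nij n hnij ((n ^ m) X) Z,
        aux_pow_succ_apply' n m (⁅X, n Z⁆ - n ⁅X, Z⁆), ← ih]
      simp only [map_sub]
      abel

lemma aux_K (hnij : IsNijenhuis n) (b : ℕ) (X Z : g) :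
    ⁅n X, (n ^ b) Z⁆ = n ⁅X, (n ^ b) Z⁆ + (n ^ b) ⁅n X, Z⁆ - (n ^ b) (n ⁅X, Z⁆) := by
  induction b generalizing Z with
  | zero => simp only [pow_zero, Module.End.one_apply]; abel
  | succ m ih =>
      rw [aux_pow_succ_apply n m Z, ih (n Z), aux_nij n hnij X Z]
      simp only [map_add, map_sub]
      rw [aux_pow_succ_apply n m ⁅n X, Z⁆, aux_pow_succ_apply n m (n ⁅X, Z⁆)]
      abel

lemma aux_CC (hnij : IsNijenhuis n) (a b : ℕ) (X Z : g) :
    ⁅(n ^ a) X, (n ^ b) Z⁆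
      = (n ^ a) ⁅X, (n ^ b) Z⁆ + (n ^ b) ⁅(n ^ a) X, Z⁆ - (n ^ a) ((n ^ b) ⁅X, Z⁆) := by
  induction a with
  | zero => simp only [pow_zero, Module.End.one_apply]; abel
  | succ m ih =>
      rw [aux_pow_succ_apply' n m X, aux_K n hnij b ((n ^ m) X) Z, ih]
      simp only [map_add, map_sub]
      rw [aux_pow_comm n b ⁅(n ^ m) X, Z⁆,
        ← aux_pow_succ_apply' n m ⁅X, (n ^ b) Z⁆,
        ← aux_pow_succ_apply' n m ((n ^ b) ⁅X, Z⁆)]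
      abel

end Aux

/-- If `(r, n)` is an r-n structure on `g`, then for all natural numbers
`k, l` the map `n^k ∘ r + n^l ∘ r` is a solution of the CYBE; i.e. the r-matrices
`r_k := n^k ∘ r` of the hierarchy are pairwise compatible. -/
theorem hierarchy_pairwise_compatible
    {g : Type*} [LieRing g] [LieAlgebra ℝ g] [FiniteDimensional ℝ g]
    (r : Module.Dual ℝ g →ₗ[ℝ] g) (n : g →ₗ[ℝ] g) (h : IsRN r n) :
    ∀ k l : ℕ, IsCYBE ((n ^ k) ∘ₗ r + (n ^ l) ∘ₗ r) := by
  obtain ⟨hskew, hcybe, hnij, hnr, hconc⟩ := h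
  -- scalar form of the vanishing concomitant hypothesis
  have hv : ∀ (α β : Module.Dual ℝ g) (Y : g),
      β ⁅r α, n Y⁆ - β (n ⁅r α, Y⁆) = α ⁅r β, n Y⁆ - α (n ⁅r β, Y⁆) := by
    intro α β Y
    have h1 := LinearMap.congr_fun (hconc α β) Y
    simp only [coad, LinearMap.sub_apply, LinearMap.add_apply, LinearMap.neg_apply,
      LinearMap.dualMap_apply, LieAlgebra.ad_apply, LinearMap.zero_apply] at h1
    linarith
  -- powers of n against r
  have hnrk : ∀ (k : ℕ) (α : Module.Dual ℝ g), (n ^ k) (r α) = r ((n.dualMap ^ k) α) := by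
    intro k
    induction k with
    | zero => simp
    | succ m ih =>
        intro α
        rw [aux_pow_succ_apply' n m (r α), ih α, hnr ((n.dualMap ^ m) α),
          pow_succ', Module.End.mul_apply]
  -- symmetry of the k-th "G" pairing
  have hGsym : ∀ (k : ℕ) (α β : Module.Dual ℝ g) (Y : g),
      β ⁅r α, (n ^ k) Y⁆ - β ((n ^ k) ⁅r α, Y⁆)
        = α ⁅r β, (n ^ k) Y⁆ - α ((n ^ k) ⁅r β, Y⁆) := by
    intro k
    induction k with
    | zero => simp
    | succ m ih =>
        intro α β Y
        have e1 := ih α β (n Y)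
        have e2 : β ((n ^ m) ⁅r α, n Y⁆) - β ((n ^ m) (n ⁅r α, Y⁆))
            = α ((n ^ m) ⁅r β, n Y⁆) - α ((n ^ m) (n ⁅r β, Y⁆)) := by
          have h1 := hv α ((n.dualMap ^ m) β) Y
          rw [aux_dual_pow_apply n m β ⁅r α, n Y⁆,
            aux_dual_pow_apply n m β (n ⁅r α, Y⁆), ← hnrk m β] at h1
          have h2 := congrArg α (aux_G_pow n hnij m (r β) Y)
          simp only [map_sub] at h2
          linarith
        rw [aux_pow_succ_apply n m Y, aux_pow_succ_apply n m ⁅r α, Y⁆,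
          aux_pow_succ_apply n m ⁅r β, Y⁆]
        linarith
  -- closed formula for the Sklyanin bracket of n^k ∘ r
  have hS : ∀ (k : ℕ) (α β : Module.Dual ℝ g),
      sklyanin ((n ^ k) ∘ₗ r) α β
        = sklyanin r ((n.dualMap ^ k) α) β + sklyanin r α ((n.dualMap ^ k) β)
          - (n.dualMap ^ k) (sklyanin r α β) := by
    intro k α β
    ext Z
    have hg := hGsym k α β Z
    simp only [sklyanin, LinearMap.sub_apply, LinearMap.add_apply]
    rw [aux_dual_pow_apply n k (coad (r α) β - coad (r β) α) Z]
    simp only [coad, LinearMap.sub_apply, LinearMap.neg_apply, LinearMap.dualMap_apply,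
      LieAlgebra.ad_apply, LinearMap.comp_apply]
    rw [aux_dual_pow_apply n k α ⁅r β, Z⁆, aux_dual_pow_apply n k β ⁅r α, Z⁆,
      ← hnrk k α, ← hnrk k β]
    linarith
  -- r applied to the Sklyanin bracket of n^k ∘ r
  have hQ : ∀ (b : ℕ) (α β : Module.Dual ℝ g),
      r (sklyanin ((n ^ b) ∘ₗ r) α β)
        = ⁅(n ^ b) (r α), r β⁆ + ⁅r α, (n ^ b) (r β)⁆ - (n ^ b) ⁅r α, r β⁆ := by
    intro b α β
    rw [hS b α β, map_sub, map_add, hcybe ((n.dualMap ^ b) α) β,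
      hcybe α ((n.dualMap ^ b) β), ← hnrk b α, ← hnrk b β,
      ← hnrk b (sklyanin r α β), hcybe α β]
  -- additivity of the Sklyanin bracket in r
  have hadd : ∀ (a b : Module.Dual ℝ g →ₗ[ℝ] g) (α β : Module.Dual ℝ g),
      sklyanin (a + b) α β = sklyanin a α β + sklyanin b α β := by
    intro a b α β
    ext Z
    simp only [sklyanin, coad, LinearMap.sub_apply, LinearMap.add_apply,
      LinearMap.neg_apply, LinearMap.dualMap_apply, LieAlgebra.ad_apply, add_lie, map_add]
    ring
  intro k l α β
  have hXY : ∀ (a b : ℕ),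
      ⁅(n ^ a) (r α), (n ^ b) (r β)⁆
        = (n ^ a) ⁅r α, (n ^ b) (r β)⁆ + (n ^ b) ⁅(n ^ a) (r α), r β⁆
          - (n ^ a) ((n ^ b) ⁅r α, r β⁆) := fun a b => aux_CC n hnij a b (r α) (r β)
  simp only [LinearMap.add_apply, LinearMap.comp_apply]
  rw [hadd, map_add, map_add, hQ k α β, hQ l α β]
  simp only [map_add, map_sub]
  rw [add_lie, lie_add, lie_add, hXY k k, hXY k l, hXY l k, hXY l l]
  abel
end
end

section
/- Let g be the Lie algebra A_{4,1}. A skew-symmetric linear map r : g* → g is a solution of the CYBE if and only if ε4(r(ε2)) = 0 and ε4(r(ε3)) = 0; equivalently, the skew-symmetric solutions of the CYBE on A_{4,1} are exactly the 2-vectors of the form r¹²·e1∧e2 + r¹³·e1∧e3 + r¹⁴·e1∧e4 + r²³·e2∧e3 with arbitrary real coefficients r¹², r¹³, r¹⁴, r²³. -/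
noncomputable section

open Module

variable {g : Type*} [LieRing g] [LieAlgebra ℝ g]

/-- The underlying space of the Lie algebra `A_{4,1}`: `ℝ⁴`. -/
def A41 : Type := Fin 4 → ℝ

instance : AddCommGroup A41 := inferInstanceAs (AddCommGroup (Fin 4 → ℝ))
instance : Module ℝ A41 := inferInstanceAs (Module ℝ (Fin 4 → ℝ))

namespace A41

@[simp] theorem add_apply (x y : A41) (i : Fin 4) : (x + y) i = x i + y i := rfl
@[simp] theorem smul_apply (c : ℝ) (x : A41) (i : Fin 4) : (c • x) i = c * x i := rfl
@[simp] theorem neg_apply (x : A41) (i : Fin 4) : (-x) i = -(x i) := rfl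
@[simp] theorem sub_apply (x y : A41) (i : Fin 4) : (x - y) i = x i - y i := rfl
@[simp] theorem zero_apply (i : Fin 4) : (0 : A41) i = 0 := rfl

/-- The bracket of `A_{4,1}`: `[e2, e4] = e1`, `[e3, e4] = e2`. -/
def br (x y : A41) : A41 := fun i =>
  if i = 0 then x 1 * y 3 - x 3 * y 1
  else if i = 1 then x 2 * y 3 - x 3 * y 2
  else 0

@[simp] theorem br_apply (x y : A41) (i : Fin 4) :
    br x y i = if i = 0 then x 1 * y 3 - x 3 * y 1
      else if i = 1 then x 2 * y 3 - x 3 * y 2 else 0 := rfl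

instance : LieRing A41 where
  bracket := br
  add_lie x y z := by funext i; simp [br]; split_ifs <;> ring
  lie_add x y z := by funext i; simp [br]; split_ifs <;> ring
  lie_self x := by funext i; simp [br]; split_ifs <;> ring
  leibniz_lie x y z := by funext i; simp [br]; split_ifs <;> ring

instance : LieAlgebra ℝ A41 where
  lie_smul c x y := by funext i; show br x (c • y) i = (c • br x y) i; simp [br]; split_ifs <;> ring

/-- Basis vectors `e1, e2, e3, e4` (zero-indexed). -/
def e (i : Fin 4) : A41 := fun j => if j = i then 1 else 0

/-- Dual basis `ε1, ε2, ε3, ε4` (zero-indexed). -/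
def eps (i : Fin 4) : Module.Dual ℝ A41 where
  toFun x := x i
  map_add' _ _ := rfl
  map_smul' _ _ := rfl

end A41

/-! Write a skew `r` as `Σ_{i<j} rⁱʲ eᵢ ∧ eⱼ`. The CYBE defect `γ (r [α, β]^r - [r α, r β])` is the
Schouten square `[r, r]`; on `A_{4,1}` its components on `ε₁ε₂ε₃`, `ε₁ε₂ε₄`, `ε₁ε₃ε₄`, `ε₂ε₃ε₄` are
`r¹³r³⁴ - r²³r²⁴`, `r¹⁴r³⁴ - (r²⁴)²`, `-r²⁴r³⁴` and `-(r³⁴)²`. The last forces `r³⁴ = 0`, the second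
then forces `r²⁴ = 0`, and conversely all four vanish once `r²⁴ = r³⁴ = 0`. -/

section General

variable {r : Module.Dual ℝ g →ₗ[ℝ] g}

theorem IsSkew.apply_self (hr : IsSkew r) (α : Module.Dual ℝ g) : α (r α) = 0 := by
  linarith [hr α α]

theorem sklyanin_apply (r : Module.Dual ℝ g →ₗ[ℝ] g) (α β : Module.Dual ℝ g) (y : g) :
    sklyanin r α β y = α ⁅r β, y⁆ - β ⁅r α, y⁆ := by
  simp only [sklyanin, coad, LinearMap.sub_apply, LinearMap.neg_apply,
    LinearMap.dualMap_apply, LieAlgebra.ad_apply]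
  ring

end General

namespace A41

@[simp] theorem eps_apply (i : Fin 4) (x : A41) : eps i x = x i := rfl

@[simp] theorem e_apply (i j : Fin 4) : e i j = if j = i then 1 else 0 := rfl

@[simp] theorem lie_apply (x y : A41) (i : Fin 4) : ⁅x, y⁆ i = br x y i := rfl

theorem eq_sum_smul_e (x : A41) : x = x 0 • e 0 + x 1 • e 1 + x 2 • e 2 + x 3 • e 3 := by
  funext j; fin_cases j <;> simp

theorem dual_apply (γ : Module.Dual ℝ A41) (x : A41) :
    γ x = x 0 * γ (e 0) + x 1 * γ (e 1) + x 2 * γ (e 2) + x 3 * γ (e 3) := by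
  conv_lhs => rw [eq_sum_smul_e x]
  simp only [map_add, map_smul, smul_eq_mul]

theorem dual_lie (γ : Module.Dual ℝ A41) (x y : A41) :
    γ ⁅x, y⁆ = (x 1 * y 3 - x 3 * y 1) * γ (e 0) + (x 2 * y 3 - x 3 * y 2) * γ (e 1) := by
  rw [dual_apply γ ⁅x, y⁆]
  simp

theorem dual_eq_sum_smul_eps (γ : Module.Dual ℝ A41) :
    γ = γ (e 0) • eps 0 + γ (e 1) • eps 1 + γ (e 2) • eps 2 + γ (e 3) • eps 3 := by
  ext x
  simp only [LinearMap.add_apply, LinearMap.smul_apply, eps_apply, smul_eq_mul, dual_apply γ x]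
  ring

/-- The 2-vector `x ∧ y`, viewed as a map `g* → g`. -/
def wedge (x y : A41) (α : Module.Dual ℝ A41) : A41 := α x • y - α y • x

variable {r : Module.Dual ℝ A41 →ₗ[ℝ] A41}

theorem apply_eq_sum_wedge (hr : IsSkew r) (α : Module.Dual ℝ A41) :
    r α = r (eps 0) 1 • wedge (e 0) (e 1) α + r (eps 0) 2 • wedge (e 0) (e 2) α
      + r (eps 0) 3 • wedge (e 0) (e 3) α + r (eps 1) 2 • wedge (e 1) (e 2) α
      + r (eps 1) 3 • wedge (e 1) (e 3) α + r (eps 2) 3 • wedge (e 2) (e 3) α := by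
  have hswap (i j : Fin 4) : r (eps j) i = -r (eps i) j := hr (eps i) (eps j)
  have hdiag (i : Fin 4) : r (eps i) i = 0 := hr.apply_self (eps i)
  conv_lhs => rw [dual_eq_sum_smul_eps α]
  funext i
  fin_cases i <;>
    simp only [Fin.isValue, Fin.zero_eta, Fin.mk_one, Fin.reduceFinMk, map_add, map_smul, wedge,
      add_apply, smul_apply, sub_apply, e_apply, Fin.reduceEq, if_true, if_false, hdiag, hswap 1 0,
      hswap 2 0, hswap 3 0, hswap 2 1, hswap 3 1, hswap 3 2] <;>
    ring

theorem apply_eq_sum_wedge_of_eq_zero (hr : IsSkew r) (h13 : r (eps 1) 3 = 0)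
    (h23 : r (eps 2) 3 = 0) (α : Module.Dual ℝ A41) :
    r α = r (eps 0) 1 • wedge (e 0) (e 1) α + r (eps 0) 2 • wedge (e 0) (e 2) α
      + r (eps 0) 3 • wedge (e 0) (e 3) α + r (eps 1) 2 • wedge (e 1) (e 2) α := by
  simpa [h13, h23] using apply_eq_sum_wedge hr α

theorem isCYBE_of_apply_eq {c01 c02 c03 c12 : ℝ}
    (hr : ∀ α, r α = c01 • wedge (e 0) (e 1) α + c02 • wedge (e 0) (e 2) α
      + c03 • wedge (e 0) (e 3) α + c12 • wedge (e 1) (e 2) α) : IsCYBE r := by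
  intro α β
  funext i
  simp only [hr, sklyanin_apply, dual_lie, wedge]
  fin_cases i <;> simp only [Fin.zero_eta, Fin.mk_one, Fin.reduceFinMk, add_apply, smul_apply,
    sub_apply, lie_apply, br_apply, e_apply, Fin.reduceEq, if_true, if_false, Fin.isValue] <;> ring

theorem eq_zero_of_isCYBE {c01 c02 c03 c12 c13 c23 : ℝ}
    (hr : ∀ α, r α = c01 • wedge (e 0) (e 1) α + c02 • wedge (e 0) (e 2) α
      + c03 • wedge (e 0) (e 3) α + c12 • wedge (e 1) (e 2) α
      + c13 • wedge (e 1) (e 3) α + c23 • wedge (e 2) (e 3) α) (hc : IsCYBE r) :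
    c13 = 0 ∧ c23 = 0 := by
  -- `c23 = r³⁴` and `c13 = r²⁴`, read off from the `ε₂ε₄ε₃` and `ε₁ε₂ε₄` components of the defect
  have h23 : c23 = 0 := by
    simpa [hr, sklyanin_apply, wedge] using congrFun (hc (eps 1) (eps 3)) 2
  have h13 : c13 = 0 := by
    simpa [hr, sklyanin_apply, wedge, h23] using congrFun (hc (eps 0) (eps 1)) 3
  exact ⟨h13, h23⟩

end A41

open A41 in
/-- On the Lie algebra `A_{4,1}`, a skew-symmetric linear map `r : g* → g`
is a solution of the CYBE iff `ε4(r(ε2)) = 0` and `ε4(r(ε3)) = 0`; equivalently, iff `r`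
is of the form `r¹²·e1∧e2 + r¹³·e1∧e3 + r¹⁴·e1∧e4 + r²³·e2∧e3` for some reals. -/
theorem a41_isCYBE_iff
    (r : Module.Dual ℝ A41 →ₗ[ℝ] A41) (hskew : IsSkew r) :
    (IsCYBE r ↔ (eps 3 (r (eps 1)) = 0 ∧ eps 3 (r (eps 2)) = 0)) ∧
    (IsCYBE r ↔ ∃ r12 r13 r14 r23 : ℝ, ∀ α : Module.Dual ℝ A41,
      r α = r12 • (α (e 0) • e 1 - α (e 1) • e 0)
          + r13 • (α (e 0) • e 2 - α (e 2) • e 0)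
          + r14 • (α (e 0) • e 3 - α (e 3) • e 0)
          + r23 • (α (e 1) • e 2 - α (e 2) • e 1)) := by
  have hzero : IsCYBE r → r (eps 1) 3 = 0 ∧ r (eps 2) 3 = 0 :=
    eq_zero_of_isCYBE (apply_eq_sum_wedge hskew)
  refine ⟨⟨hzero, fun ⟨h13, h23⟩ => ?_⟩, ⟨fun hc => ?_, fun ⟨_, _, _, _, hr⟩ => ?_⟩⟩
  · exact isCYBE_of_apply_eq (apply_eq_sum_wedge_of_eq_zero hskew h13 h23)
  · exact ⟨_, _, _, _, apply_eq_sum_wedge_of_eq_zero hskew (hzero hc).1 (hzero hc).2⟩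
  · exact isCYBE_of_apply_eq hr
end
end
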